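/- Let l^{αβ} be the Lorentz generators (l^{αβ})^μ_ν = η^{αμ}δ^β_ν − η^{βμ}δ^α_ν on ℝ⁴, l_{αβ} = η_{αγ}η_{βδ} l^{γδ}, and let P_S, P_A, P_η be the operators on ℝ⁴ ⊗ ℝ⁴ given by (P_S)^{μν}_{ρσ} = (1/2)(δ^μ_ρ δ^ν_σ + δ^ν_ρ δ^μ_σ), (P_A)^{μν}_{ρσ} = (1/2)(δ^μ_ρ δ^ν_σ − δ^ν_ρ δ^μ_σ), (P_η)^{μν}_{ρσ} = (1/4) η^{μν} η_{ρσ}. Suppose a ∈ ℝ⁴ ⊗ ℝ⁴ satisfies P_η a = 0, and B^{αβ} ∈ ℝ⁴ ⊗ ℝ⁴ is a family of tensors (α, β ∈ {0,1,2,3}) such that B^{αβ} = (l^{αβ} ⊗ 1 + 1 ⊗ l^{αβ}) a for all α, β. Then a = −(1/16)(P_S + 2P_A) Σ_{α,β=0}^{3} (l_{αβ} ⊗ 1 + 1 ⊗ l_{αβ}) B^{αβ}. -/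

import Mathlib

open Kronecker

noncomputable section

/-- The Minkowski metric `η = diag(1,-1,-1,-1)` on `ℝ⁴`. -/
def eta : Fin 4 → Fin 4 → ℝ := fun μ ν => if μ = ν then (if μ = 0 then 1 else -1) else 0

/-- The Lorentz generators of the vector representation,
`(l^{αβ})^μ_ν = η^{αμ} δ^β_ν − η^{βμ} δ^α_ν`, as real 4×4 matrices. -/
def lgen (α β : Fin 4) : Matrix (Fin 4) (Fin 4) ℝ :=
  Matrix.of fun μ ν => eta α μ * (if β = ν then 1 else 0) - eta β μ * (if α = ν then 1 else 0)

/-- The generators with lowered indices, `l_{αβ} = η_{αγ} η_{βδ} l^{γδ}`. -/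
def lgenLow (α β : Fin 4) : Matrix (Fin 4) (Fin 4) ℝ :=
  ∑ γ : Fin 4, ∑ δ : Fin 4, (eta α γ * eta β δ) • lgen γ δ

/-- Symmetrizer `(P_S)^{μν}_{ρσ} = (1/2)(δ^μ_ρ δ^ν_σ + δ^ν_ρ δ^μ_σ)`. -/
def PS : Matrix (Fin 4 × Fin 4) (Fin 4 × Fin 4) ℝ :=
  Matrix.of fun p q =>
    (1 / 2 : ℝ) * ((if p.1 = q.1 ∧ p.2 = q.2 then 1 else 0) +
      (if p.1 = q.2 ∧ p.2 = q.1 then 1 else 0))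

/-- Antisymmetrizer `(P_A)^{μν}_{ρσ} = (1/2)(δ^μ_ρ δ^ν_σ − δ^ν_ρ δ^μ_σ)`. -/
def PA : Matrix (Fin 4 × Fin 4) (Fin 4 × Fin 4) ℝ :=
  Matrix.of fun p q =>
    (1 / 2 : ℝ) * ((if p.1 = q.1 ∧ p.2 = q.2 then 1 else 0) -
      (if p.1 = q.2 ∧ p.2 = q.1 then 1 else 0))

/-- Trace projector `(P_η)^{μν}_{ρσ} = (1/4) η^{μν} η_{ρσ}`. -/
def Peta : Matrix (Fin 4 × Fin 4) (Fin 4 × Fin 4) ℝ :=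
  Matrix.of fun p q => (1 / 4 : ℝ) * eta p.1 p.2 * eta q.1 q.2

/-!
The quadratic Casimir of the vector representation is `∑ l_{αβ} l^{αβ} = -6`, and the mixed
contraction is `∑ l_{αβ} ⊗ l^{αβ} = 2 (η ⊗ η - swap) = 8 P_η - 2 swap`. Hence the Casimir of the
tensor-product representation is `-12 + 16 P_η - 4 swap`, which acts as `-12 - 4 swap` on traceless
tensors. As `swap² = 1` and `P_S + 2 P_A = (3 - swap) / 2`, the product of the two is `-16`, so
`-(1/16) (P_S + 2 P_A)` inverts the Casimir on traceless tensors.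
-/

namespace Matrix

variable {ι l m n p R : Type*}

theorem sum_kronecker [CommSemiring R] (s : Finset ι) (A : ι → Matrix l m R)
    (B : Matrix n p R) : (∑ i ∈ s, A i) ⊗ₖ B = ∑ i ∈ s, A i ⊗ₖ B := by
  ext
  simp only [kroneckerMap_apply, sum_apply, Finset.sum_mul]

theorem kronecker_sum [CommSemiring R] (s : Finset ι) (A : Matrix l m R)
    (B : ι → Matrix n p R) : A ⊗ₖ (∑ i ∈ s, B i) = ∑ i ∈ s, A ⊗ₖ B i := by
  ext
  simp only [kroneckerMap_apply, sum_apply, Finset.mul_sum]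

theorem kronecker_one_add_one_kronecker_mul [Fintype n] [DecidableEq n] [CommSemiring R]
    (A B : Matrix n n R) :
    (A ⊗ₖ 1 + 1 ⊗ₖ A) * (B ⊗ₖ 1 + 1 ⊗ₖ B) =
      (A * B) ⊗ₖ 1 + A ⊗ₖ B + B ⊗ₖ A + 1 ⊗ₖ (A * B) := by
  simp only [add_mul, mul_add, ← mul_kronecker_mul, one_mul, mul_one]
  abel

def swapMatrix (n R : Type*) [DecidableEq n] [Zero R] [One R] : Matrix (n × n) (n × n) R :=
  Equiv.Perm.permMatrix R (Equiv.prodComm n n)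

theorem swapMatrix_apply [DecidableEq n] [Zero R] [One R] (p q : n × n) :
    swapMatrix n R p q = if p.swap = q then 1 else 0 := by
  simp [swapMatrix, PEquiv.toMatrix_apply, eq_comm]

theorem swapMatrix_mul_self [DecidableEq n] [Fintype n] [NonAssocSemiring R] :
    swapMatrix n R * swapMatrix n R = 1 := by
  rw [swapMatrix, ← permMatrix_mul, show Equiv.prodComm n n * Equiv.prodComm n n = 1 from
    Equiv.ext Prod.swap_swap, permMatrix_one]

end Matrix

open Matrix

theorem eta_sq (μ : Fin 4) : eta μ μ ^ 2 = 1 := by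
  simp only [eta]; split_ifs <;> norm_num

theorem eta_eq_ite (μ ν : Fin 4) : eta μ ν = if μ = ν then eta μ μ else 0 := by
  by_cases h : μ = ν <;> simp [eta, h]

theorem sum_eta_smul {M : Type*} [AddCommMonoid M] [Module ℝ M] (α : Fin 4) (f : Fin 4 → M) :
    ∑ γ, eta α γ • f γ = eta α α • f α :=
  Finset.sum_eq_single α (fun γ _ h => by simp [eta, Ne.symm h]) (by simp)

theorem lgen_apply (α β μ ν : Fin 4) :
    lgen α β μ ν = (if α = μ then if β = ν then eta μ μ else 0 else 0) -
      (if β = μ then if α = ν then eta μ μ else 0 else 0) := by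
  simp only [lgen, Matrix.of_apply, eta]
  split_ifs <;> grind

theorem lgenLow_eq (α β : Fin 4) : lgenLow α β = (eta α α * eta β β) • lgen α β := by
  simp only [lgenLow, mul_smul, ← Finset.smul_sum, sum_eta_smul]

theorem lgen_kronecker_lgenLow (α β : Fin 4) :
    lgen α β ⊗ₖ lgenLow α β = lgenLow α β ⊗ₖ lgen α β := by
  rw [lgenLow_eq, kronecker_smul, smul_kronecker]

theorem sum_lgenLow_mul_lgen :
    ∑ α : Fin 4, ∑ β : Fin 4, lgenLow α β * lgen α β = (-6 : ℝ) • 1 := by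
  ext μ ρ
  simp only [lgenLow_eq, Matrix.sum_apply, smul_mul, Matrix.smul_apply, Matrix.mul_apply,
    lgen_apply, Matrix.one_apply, smul_eq_mul]
  fin_cases μ <;> fin_cases ρ <;> simp [Fin.sum_univ_four, eta] <;> norm_num

theorem sum_lgenLow_kronecker_lgen :
    ∑ α : Fin 4, ∑ β : Fin 4, lgenLow α β ⊗ₖ lgen α β =
      (8 : ℝ) • Peta - (2 : ℝ) • swapMatrix (Fin 4) ℝ := by
  ext ⟨μ, ν⟩ ⟨ρ, σ⟩
  simp only [lgenLow_eq, Matrix.sum_apply, smul_kronecker, Matrix.smul_apply, kronecker_apply,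
    lgen_apply, smul_eq_mul, mul_sub, sub_mul, Finset.sum_sub_distrib, ite_mul, mul_ite, zero_mul,
    mul_zero, Finset.sum_ite_eq', Finset.mem_univ, if_true, Finset.sum_ite_irrel, Finset.sum_const_zero,
    Matrix.sub_apply, Peta, Matrix.of_apply, swapMatrix_apply, Prod.swap_prod_mk, Prod.mk.injEq]
  rw [eta_eq_ite μ ν, eta_eq_ite ρ σ]
  split_ifs <;> subst_vars <;> grind [eta_sq]

theorem sum_tensor_casimir :
    ∑ α : Fin 4, ∑ β : Fin 4,
      (lgenLow α β ⊗ₖ (1 : Matrix (Fin 4) (Fin 4) ℝ) + 1 ⊗ₖ lgenLow α β) *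
        (lgen α β ⊗ₖ 1 + 1 ⊗ₖ lgen α β) =
      (-12 : ℝ) • 1 + (16 : ℝ) • Peta - (4 : ℝ) • swapMatrix (Fin 4) ℝ := by
  simp only [kronecker_one_add_one_kronecker_mul, lgen_kronecker_lgenLow, Finset.sum_add_distrib,
    ← sum_kronecker, ← kronecker_sum, sum_lgenLow_mul_lgen, sum_lgenLow_kronecker_lgen,
    smul_kronecker, kronecker_smul, one_kronecker_one]
  module

theorem PS_add_two_smul_PA :
    PS + (2 : ℝ) • PA = (3 / 2 : ℝ) • 1 - (1 / 2 : ℝ) • swapMatrix (Fin 4) ℝ := by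
  ext ⟨μ, ν⟩ ⟨ρ, σ⟩
  simp only [PS, PA, Matrix.add_apply, Matrix.sub_apply, Matrix.smul_apply, Matrix.of_apply,
    Matrix.one_apply, swapMatrix_apply, Prod.swap_prod_mk, Prod.mk.injEq, smul_eq_mul]
  split_ifs <;> grind

theorem rank_two_cocycle_solution (a : Fin 4 × Fin 4 → ℝ)
    (ha : Peta.mulVec a = 0)
    (B : Fin 4 → Fin 4 → (Fin 4 × Fin 4 → ℝ))
    (hB : ∀ α β : Fin 4,
      B α β = (lgen α β ⊗ₖ (1 : Matrix (Fin 4) (Fin 4) ℝ) +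
        (1 : Matrix (Fin 4) (Fin 4) ℝ) ⊗ₖ lgen α β).mulVec a) :
    a = (-(1 / 16) : ℝ) • (PS + (2 : ℝ) • PA).mulVec
        (∑ α : Fin 4, ∑ β : Fin 4,
          (lgenLow α β ⊗ₖ (1 : Matrix (Fin 4) (Fin 4) ℝ) +
            (1 : Matrix (Fin 4) (Fin 4) ℝ) ⊗ₖ lgenLow α β).mulVec (B α β)) := by
  have hsum : ∑ α : Fin 4, ∑ β : Fin 4,
      (lgenLow α β ⊗ₖ (1 : Matrix (Fin 4) (Fin 4) ℝ) + 1 ⊗ₖ lgenLow α β) *ᵥ B α β =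
      (∑ α : Fin 4, ∑ β : Fin 4,
        (lgenLow α β ⊗ₖ (1 : Matrix (Fin 4) (Fin 4) ℝ) + 1 ⊗ₖ lgenLow α β) *
          (lgen α β ⊗ₖ 1 + 1 ⊗ₖ lgen α β)) *ᵥ a := by
    simp only [hB, mulVec_mulVec, sum_mulVec]
  have htraceless : ((-12 : ℝ) • 1 + (16 : ℝ) • Peta - (4 : ℝ) • swapMatrix (Fin 4) ℝ) *ᵥ a =
      ((-12 : ℝ) • 1 - (4 : ℝ) • swapMatrix (Fin 4) ℝ) *ᵥ a := by
    simp only [sub_mulVec, add_mulVec, smul_mulVec, ha, smul_zero, add_zero]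
  have hinverse : ((3 / 2 : ℝ) • 1 - (1 / 2 : ℝ) • swapMatrix (Fin 4) ℝ) *
      ((-12 : ℝ) • 1 - (4 : ℝ) • swapMatrix (Fin 4) ℝ) = (-16 : ℝ) • 1 := by
    simp only [mul_sub, sub_mul, smul_mul_smul, mul_one, one_mul, swapMatrix_mul_self]
    module
  rw [hsum, sum_tensor_casimir, PS_add_two_smul_PA, htraceless, mulVec_mulVec, hinverse,
    smul_mulVec, one_mulVec, smul_smul]
  norm_num
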